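/- Let n ≥ 1 and let q be a positive integer, and set N_r := q^r + q^{2r} + … + q^{nr} for r ≥ 1 (when q is a prime power this is the number of 𝔽_{q^r}-points of ℙ^n minus a rational point). With a_i := (1/i)·Σ_{d ∣ i} μ(i/d)·N_d and π_w := Σ_{λ : |λ| = w} (−1)^{ℓ(λ)} · Π_{i≥1} C(a_i, λ_i) (sum over all partitions λ of weight w), one has π_w = 0 for every w ≥ n + 1. -/

import Mathlib

open scoped Classical

/-- Generalized binomial coefficient `C(a, k) = a(a-1)⋯(a-k+1)/k!` for `a : ℚ`. -/
def genChoose (a : ℚ) (k : ℕ) : ℚ :=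
  (∏ j ∈ Finset.range k, (a - (j : ℚ))) / (Nat.factorial k : ℚ)

/-- `a N i = (1/i) Σ_{d ∣ i} μ(i/d) N d`, the Möbius convolution divided by `i`. -/
noncomputable def moebiusConv (N : ℕ → ℚ) (i : ℕ) : ℚ :=
  (1 / (i : ℚ)) * ∑ d ∈ i.divisors, ((ArithmeticFunction.moebius (i / d) : ℤ) : ℚ) * N d

/-- `π_w(N) = Σ_{|λ| = w} (−1)^{ℓ(λ)} Π_{i ≥ 1} C(a_i, λ_i)`, the sum over all partitions `λ`
of weight `w`, where `λ_i` is the number of parts of `λ` equal to `i` and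
`a_i = (1/i) Σ_{d ∣ i} μ(i/d) N d`. -/
noncomputable def piW (N : ℕ → ℚ) (w : ℕ) : ℚ :=
  ∑ p : Nat.Partition w, (-1 : ℚ) ^ (Multiset.card p.parts) *
    ∏ i ∈ p.parts.toFinset, genChoose (moebiusConv N i) (p.parts.count i)

/-!
Let `A = ∏_{i ≥ 1} (1 - X ^ i) ^ {a_i}`; by Euler's product formula for the partition generating
function, `π_w` is the coefficient of `X ^ w` in `A`. Möbius inversion gives
`∑_{i ∣ r} i a_i = N_r`, so the logarithmic derivative of `A` is `-∑_{r ≥ 1} N_r X ^ (r - 1)`.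
The polynomial `B = ∏_{j=1}^n (1 - q ^ j X)` has the same logarithmic derivative and constant
term `1`. A power series is determined up to `X ^ w` by its constant term and its logarithmic
derivative up to `X ^ (w - 1)`, so `A` and `B` agree up to `X ^ w`, and `deg B = n < w`.
-/

open Finset PowerSeries
open scoped PowerSeries.WithPiTopology

theorem Derivation.map_prod_of_eq_mul {R A ι : Type*} [CommSemiring R] [CommSemiring A]
    [Algebra R A] (D : Derivation R A A) (s : Finset ι) {f S : ι → A}
    (h : ∀ i ∈ s, D (f i) = S i * f i) :
    D (∏ i ∈ s, f i) = (∑ i ∈ s, S i) * ∏ i ∈ s, f i := by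
  induction s using Finset.cons_induction with
  | empty => simp
  | cons a s ha ih =>
    rw [prod_cons, sum_cons, D.leibniz, h a (mem_cons_self a s),
      ih fun i hi ↦ h i (mem_cons_of_mem hi), smul_eq_mul, smul_eq_mul]
    ring

namespace PowerSeries

variable {R : Type*} [CommRing R]

theorem coeff_eq_of_derivative_eq_mul [IsAddTorsionFree R] {A B S T : R⟦X⟧}
    (hA : d⁄dX R A = S * A) (hB : d⁄dX R B = T * B) (h₀ : coeff 0 A = coeff 0 B) {w : ℕ}
    (hST : ∀ r < w, coeff r S = coeff r T) : ∀ m ≤ w, coeff m A = coeff m B := by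
  intro m
  induction m using Nat.strong_induction_on with
  | _ m ih =>
    intro hm
    rcases m with _ | k
    · exact h₀
    · -- the `k`-th coefficient of `S * A` only involves `coeff 0 A, …, coeff k A`
      have hk : coeff k (d⁄dX R A) = coeff k (d⁄dX R B) := by
        rw [hA, hB, coeff_mul, coeff_mul]
        refine sum_congr rfl fun p hp ↦ ?_
        have hp := mem_antidiagonal.mp hp
        rw [hST p.1 (by omega), ih p.2 (by omega) (by omega)]
      rw [coeff_derivative, coeff_derivative, mul_comm, mul_comm _ ((k : R) + 1)] at hk
      exact nsmul_right_injective k.succ_ne_zero (by simpa [nsmul_eq_mul] using hk)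

theorem derivative_one_sub_C_mul_X (c : R) :
    d⁄dX R (1 - C c * X) = (mk fun r ↦ -c ^ (r + 1)) * (1 - C c * X) := by
  have hgeom : (mk fun r ↦ c ^ r) * (1 - C c * X) = 1 := by
    simpa [rescale_mk, rescale_X] using congrArg (rescale c) (mk_one_mul_one_sub_eq_one R)
  have hmk : (mk fun r ↦ -c ^ (r + 1)) = -C c * mk fun r ↦ c ^ r := by
    ext r; simp [pow_succ', coeff_C_mul]
  rw [hmk, mul_assoc, hgeom]
  simp

theorem coeff_prod_one_sub_C_mul_X_of_card_lt {ι : Type*} (s : Finset ι) (c : ι → R) {m : ℕ}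
    (hm : #s < m) : coeff m (∏ i ∈ s, (1 - C (c i) * X)) = 0 := by
  induction s using Finset.cons_induction generalizing m with
  | empty =>
    rw [card_empty] at hm
    simp [coeff_one, hm.ne']
  | cons a s ha ih =>
    rw [card_cons] at hm
    obtain ⟨m, rfl⟩ : ∃ k, m = k + 1 := ⟨m - 1, by omega⟩
    rw [prod_cons, sub_mul, one_mul, map_sub, mul_assoc, coeff_C_mul, coeff_succ_X_mul,
      ih (by omega), ih (by omega), mul_zero, sub_zero]

theorem coeff_eq_coeff_prod_range_of_hasProd [TopologicalSpace R] [T2Space R] {F : ℕ → R⟦X⟧}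
    {P : R⟦X⟧} (hP : HasProd F P) {w : ℕ} (hF : ∀ i ≥ w, X ^ (w + 1) ∣ F i - 1) :
    coeff w P = coeff w (∏ i ∈ range w, F i) := by
  have hstable : ∀ s ⊇ range w, coeff w (∏ i ∈ s, F i) = coeff w (∏ i ∈ range w, F i) := by
    intro s hs
    have htail : X ^ (w + 1) ∣ ∏ i ∈ s \ range w, F i - 1 := by
      refine prod_induction _ (fun Q ↦ X ^ (w + 1) ∣ Q - 1) (fun Q Q' hQ hQ' ↦ ?_) (by simp)
        fun i hi ↦ hF i (by simpa using (mem_sdiff.mp hi).2)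
      rw [show Q * Q' - 1 = (Q - 1) * Q' + (Q' - 1) by ring]
      exact dvd_add (dvd_mul_of_dvd_left hQ _) hQ'
    obtain ⟨g, hg⟩ := htail
    rw [← prod_sdiff hs, sub_eq_iff_eq_add.mp hg, add_mul, one_mul, map_add, mul_assoc,
      coeff_X_pow_mul', if_neg (by omega), zero_add]
  exact tendsto_nhds_unique ((WithPiTopology.tendsto_iff_coeff_tendsto R _ _ _).mp hP w)
    (tendsto_atTop_of_eventually_const hstable)

end PowerSeries

theorem genChoose_zero (a : ℚ) : genChoose a 0 = 1 := by simp [genChoose]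

theorem succ_mul_genChoose_succ (a : ℚ) (k : ℕ) :
    ((k : ℚ) + 1) * genChoose a (k + 1) = (a - k) * genChoose a k := by
  simp only [genChoose, prod_range_succ, Nat.factorial_succ, Nat.cast_mul, Nat.cast_succ]
  field_simp

/-- `(1 - X ^ i) ^ a`, expanded by the binomial theorem. -/
noncomputable def oneSubXPowPow (a : ℚ) (i : ℕ) : ℚ⟦X⟧ :=
  mk fun m ↦ if i ∣ m then (-1) ^ (m / i) * genChoose a (m / i) else 0

/-- `-a i X ^ (i - 1) / (1 - X ^ i)`, the logarithmic derivative of `(1 - X ^ i) ^ a`. -/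
noncomputable def logDerivOneSubXPowPow (a : ℚ) (i : ℕ) : ℚ⟦X⟧ :=
  mk fun r ↦ if i ∣ r + 1 then -(a * i) else 0

theorem coeff_oneSubXPowPow_mul (a : ℚ) {i : ℕ} (hi : 0 < i) (k : ℕ) :
    coeff (i * k) (oneSubXPowPow a i) = (-1) ^ k * genChoose a k := by
  simp [oneSubXPowPow, Nat.mul_div_cancel_left k hi]

theorem coeff_oneSubXPowPow_of_not_dvd (a : ℚ) {i m : ℕ} (h : ¬ i ∣ m) :
    coeff m (oneSubXPowPow a i) = 0 := by
  simp [oneSubXPowPow, h]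

theorem constantCoeff_oneSubXPowPow (a : ℚ) (i : ℕ) :
    constantCoeff (oneSubXPowPow a i) = 1 := by
  simp [oneSubXPowPow, ← coeff_zero_eq_constantCoeff_apply, genChoose_zero]

theorem one_sub_X_pow_mul_derivative_oneSubXPowPow (a : ℚ) (k : ℕ) :
    (1 - X ^ (k + 1)) * d⁄dX ℚ (oneSubXPowPow a (k + 1)) =
      C (-(a * (k + 1))) * X ^ k * oneSubXPowPow a (k + 1) := by
  ext m
  rw [sub_mul, one_mul, map_sub, coeff_X_pow_mul', mul_assoc, coeff_C_mul, coeff_X_pow_mul']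
  simp only [coeff_derivative]
  rcases lt_or_ge m k with hm | hm
  · rw [if_neg (by omega), if_neg (by omega),
      coeff_oneSubXPowPow_of_not_dvd _ (Nat.not_dvd_of_pos_of_lt (by omega) (by omega))]
    simp
  obtain ⟨t, rfl⟩ := Nat.exists_eq_add_of_le hm
  rw [if_pos hm, Nat.add_sub_cancel_left]
  rcases t with _ | s
  · have h := coeff_oneSubXPowPow_mul a k.succ_pos 1
    simp only [mul_one, genChoose, prod_range_one] at h
    simp [h, constantCoeff_oneSubXPowPow]
  rw [if_pos (by omega), show k + (s + 1) - (k + 1) = s by omega,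
    show k + (s + 1) + 1 = s + 1 + (k + 1) by omega]
  by_cases hd : k + 1 ∣ s + 1
  · obtain ⟨j, hj⟩ := hd
    rw [hj, show (k + 1) * j + (k + 1) = (k + 1) * (j + 1) by ring,
      coeff_oneSubXPowPow_mul _ k.succ_pos, coeff_oneSubXPowPow_mul _ k.succ_pos]
    have hs : (s : ℚ) + 1 = (k + 1) * j := by exact_mod_cast hj
    push_cast
    linear_combination (-(k + 1 : ℚ) * (-1) ^ j) * succ_mul_genChoose_succ a j
      - (-1) ^ j * genChoose a j * hs
  · rw [coeff_oneSubXPowPow_of_not_dvd _ hd,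
      coeff_oneSubXPowPow_of_not_dvd _ fun h ↦ hd ((Nat.dvd_add_left (dvd_refl _)).mp h)]
    simp

theorem one_sub_X_pow_mul_logDerivOneSubXPowPow (a : ℚ) (k : ℕ) :
    (1 - X ^ (k + 1)) * logDerivOneSubXPowPow a (k + 1) = C (-(a * (k + 1))) * X ^ k := by
  ext m
  rw [sub_mul, one_mul, map_sub, coeff_X_pow_mul', coeff_C_mul, coeff_X_pow]
  simp only [logDerivOneSubXPowPow, coeff_mk]
  rcases lt_or_ge m (k + 1) with hm | hm
  · have hdvd : k + 1 ∣ m + 1 ↔ m = k :=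
      ⟨fun h ↦ by have := Nat.le_of_dvd m.succ_pos h; omega, by rintro rfl; rfl⟩
    simp [hdvd, show ¬ k + 1 ≤ m by omega]
  · obtain ⟨t, rfl⟩ := Nat.exists_eq_add_of_le hm
    rw [if_pos hm, Nat.add_sub_cancel_left, show k + 1 + t + 1 = t + 1 + (k + 1) by ring]
    simp [Nat.dvd_add_self_right, show k + 1 + t ≠ k by omega]

theorem derivative_oneSubXPowPow (a : ℚ) (k : ℕ) :
    d⁄dX ℚ (oneSubXPowPow a (k + 1)) =
      logDerivOneSubXPowPow a (k + 1) * oneSubXPowPow a (k + 1) := by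
  have h : (1 - X ^ (k + 1) : ℚ⟦X⟧) ≠ 0 := fun h ↦ by
    simpa using congrArg (coeff 0) h
  refine mul_left_cancel₀ h ?_
  rw [one_sub_X_pow_mul_derivative_oneSubXPowPow, ← mul_assoc,
    one_sub_X_pow_mul_logDerivOneSubXPowPow]

theorem X_pow_dvd_oneSubXPowPow_sub_one (a : ℚ) (i : ℕ) : X ^ i ∣ oneSubXPowPow a i - 1 := by
  refine X_pow_dvd_iff.mpr fun m hm ↦ ?_
  rcases m with _ | m
  · rw [map_sub, coeff_zero_eq_constantCoeff_apply, constantCoeff_oneSubXPowPow, coeff_one,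
      if_pos rfl, sub_self]
  · rw [map_sub, coeff_oneSubXPowPow_of_not_dvd _ (Nat.not_dvd_of_pos_of_lt m.succ_pos hm),
      coeff_one, if_neg m.succ_ne_zero, sub_zero]

theorem one_add_tsum_eq_oneSubXPowPow (a : ℚ) {i : ℕ} (hi : 0 < i) :
    1 + ∑' j, ((-1) ^ (j + 1) * genChoose a (j + 1)) • (X : ℚ⟦X⟧) ^ (i * (j + 1)) =
      oneSubXPowPow a i := by
  suffices HasSum (fun j ↦ ((-1) ^ (j + 1) * genChoose a (j + 1)) • (X : ℚ⟦X⟧) ^ (i * (j + 1)))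
      (oneSubXPowPow a i - 1) by
    rw [this.tsum_eq, add_sub_cancel]
  refine (WithPiTopology.hasSum_iff_hasSum_coeff ℚ).mpr fun m ↦ ?_
  simp only [coeff_smul, coeff_X_pow, smul_eq_mul, mul_ite, mul_one, mul_zero]
  rcases m with _ | m
  · rw [map_sub, coeff_zero_eq_constantCoeff_apply, constantCoeff_oneSubXPowPow, coeff_one,
      if_pos rfl, sub_self]
    convert hasSum_zero with j
    exact if_neg (Nat.mul_pos hi j.succ_pos).ne
  by_cases hd : i ∣ m + 1
  · obtain ⟨k, hk⟩ := hd
    obtain ⟨j, rfl⟩ : ∃ j, k = j + 1 := ⟨k - 1, by rcases k with _ | k <;> simp_all⟩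
    rw [hk, map_sub, coeff_oneSubXPowPow_mul _ hi, coeff_one, if_neg (by positivity), sub_zero]
    convert hasSum_ite_eq j _ using 2 with j'
    by_cases h : j = j' <;> simp [h, Nat.mul_right_inj hi.ne', eq_comm]
  · rw [map_sub, coeff_oneSubXPowPow_of_not_dvd _ hd, coeff_one, if_neg m.succ_ne_zero, sub_zero]
    convert hasSum_zero with j
    exact if_neg fun h ↦ hd ⟨_, h⟩

theorem piW_eq_coeff_prod (N : ℕ → ℚ) (w : ℕ) :
    piW N w = coeff w (∏ i ∈ range w, oneSubXPowPow (moebiusConv N (i + 1)) (i + 1)) := by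
  let f : ℕ → ℕ → ℚ := fun i c ↦ (-1) ^ c * genChoose (moebiusConv N i) c
  have hgen : piW N w = coeff w (Nat.Partition.genFun f) := by
    rw [Nat.Partition.coeff_genFun, piW]
    refine sum_congr rfl fun p _ ↦ ?_
    simp only [f, Finsupp.prod, Multiset.toFinsupp_support, Multiset.toFinsupp_apply,
      prod_mul_distrib, prod_pow_eq_pow_sum, Multiset.toFinset_sum_count_eq]
  have hprod := Nat.Partition.hasProd_genFun f
  simp only [f, one_add_tsum_eq_oneSubXPowPow _ (Nat.succ_pos _)] at hprod
  rw [hgen]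
  exact coeff_eq_coeff_prod_range_of_hasProd hprod fun i hi ↦
    (pow_dvd_pow X (by omega)).trans (X_pow_dvd_oneSubXPowPow_sub_one _ _)

theorem sum_divisors_mul_moebiusConv (N : ℕ → ℚ) {r : ℕ} (hr : 0 < r) :
    ∑ i ∈ r.divisors, (i : ℚ) * moebiusConv N i = N r := by
  refine (ArithmeticFunction.sum_eq_iff_sum_mul_moebius_eq.mpr fun n hn ↦ ?_) r hr
  rw [Nat.sum_divisorsAntidiagonal'
    (f := fun x y ↦ ((ArithmeticFunction.moebius x : ℤ) : ℚ) * N y), moebiusConv]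
  field_simp

theorem coeff_sum_logDerivOneSubXPowPow (N : ℕ → ℚ) {r w : ℕ} (hr : r < w) :
    coeff r (∑ i ∈ range w, logDerivOneSubXPowPow (moebiusConv N (i + 1)) (i + 1)) =
      -N (r + 1) := by
  have hdiv : {d ∈ Ico 1 (w + 1) | d ∣ r + 1} = (r + 1).divisors := by
    ext d
    simp only [mem_filter, mem_Ico, Nat.mem_divisors]
    refine ⟨fun h ↦ ⟨h.2, r.succ_ne_zero⟩, fun h ↦ ⟨⟨?_, ?_⟩, h.1⟩⟩
    · exact Nat.pos_of_dvd_of_pos h.1 r.succ_pos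
    · have := Nat.le_of_dvd r.succ_pos h.1; omega
  rw [← sum_divisors_mul_moebiusConv N r.succ_pos, map_sum, range_eq_Ico,
    sum_Ico_add' (fun d ↦ coeff r (logDerivOneSubXPowPow (moebiusConv N d) d)), zero_add]
  simp only [logDerivOneSubXPowPow, coeff_mk]
  rw [← sum_filter, hdiv, ← sum_neg_distrib]
  exact sum_congr rfl fun d _ ↦ by ring

theorem pi_projective_space_minus_point_vanishes_general (n : ℕ) (q : ℕ)
    (N : ℕ → ℚ)
    (hN : ∀ r : ℕ, 1 ≤ r → N r = ∑ j ∈ Finset.Icc 1 n, (q : ℚ) ^ (j * r))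
    (w : ℕ) (hw : n + 1 ≤ w) :
    piW N w = 0 := by
  have hA := (d⁄dX ℚ).map_prod_of_eq_mul (range w) fun i _ ↦
    derivative_oneSubXPowPow (moebiusConv N (i + 1)) i
  have hB := (d⁄dX ℚ).map_prod_of_eq_mul (Icc 1 n) fun j _ ↦
    derivative_one_sub_C_mul_X ((q : ℚ) ^ j)
  rw [piW_eq_coeff_prod, coeff_eq_of_derivative_eq_mul hA hB ?_ ?_ w le_rfl,
    coeff_prod_one_sub_C_mul_X_of_card_lt _ _ (by simpa using hw)]
  · simp [coeff_zero_eq_constantCoeff_apply, map_prod, constantCoeff_oneSubXPowPow]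
  · intro r hr
    rw [coeff_sum_logDerivOneSubXPowPow N hr, map_sum, hN (r + 1) (by omega)]
    simp [← pow_mul]

/-- For `n ≥ 1`, a positive integer `q`, and
`N r = q^r + q^{2r} + ⋯ + q^{nr}` (the point count of `ℙ^n` minus a rational point over
`𝔽_{q^r}` when `q` is a prime power), one has `π_w = 0` for every `w ≥ n + 1`. -/
theorem pi_projective_space_minus_point_vanishes (n : ℕ) (hn : 1 ≤ n) (q : ℕ) (hq : 1 ≤ q)
    (N : ℕ → ℚ)
    (hN : ∀ r : ℕ, 1 ≤ r → N r = ∑ j ∈ Finset.Icc 1 n, (q : ℚ) ^ (j * r))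
    (w : ℕ) (hw : n + 1 ≤ w) :
    piW N w = 0 :=
  pi_projective_space_minus_point_vanishes_general n q N hN w hw
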